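/- Let ρ and σ be density matrices on ℂ^d, viewed as bipartite states with trivial system B (dB = 1). Then R_{T,p}(σ) ≤ R_{T,p}(ρ) for every gambling game (T,p) if and only if the eigenvalue vector of σ is majorized by that of ρ, i.e. λ(σ) ≺ λ(ρ). -/

import Mathlib

/-!
With `B` trivial, `R_{T,0}` is a nonnegative combination of Ky Fan norms, so majorization makes
it monotone; conversely the game that pays only for a list of `k` candidates reads off the
`k`-th Ky Fan norm. The adversarial term is the same for every state: measuring in the Fourier
transform of an eigenbasis pinches any state to `I/d`, while no pinching can do better since a
top-`k` sum is at least `k/d` of the total, i.e. `I/d` is majorized by every state.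
-/

open Matrix Kronecker
open scoped ComplexOrder

noncomputable section

open scoped Classical

/-- Square complex matrices of size `n`. -/
abbrev Mat (n : ℕ) := Matrix (Fin n) (Fin n) ℂ

/-- Bipartite matrices on `ℂ^a ⊗ ℂ^b`. -/
abbrev BMat (a b : ℕ) := Matrix (Fin a × Fin b) (Fin a × Fin b) ℂ

/-- A density matrix: positive semidefinite with trace one. -/
def IsDensity {ι : Type} [Fintype ι] (ρ : Matrix ι ι ℂ) : Prop :=
  ρ.PosSemidef ∧ ρ.trace = 1

/-- The maximally mixed state `I/n`. -/
def uMat (n : ℕ) : Mat n := (n : ℂ)⁻¹ • 1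

/-- Choi matrix of a map on matrices. -/
def choi {ι κ : Type} [Fintype ι] [DecidableEq ι]
    (Φ : Matrix ι ι ℂ → Matrix κ κ ℂ) : Matrix (ι × κ) (ι × κ) ℂ :=
  fun p q => Φ (Matrix.single p.1 q.1 1) p.2 q.2

/-- Quantum channel: linear, trace preserving, completely positive map. -/
def IsCPTP {ι κ : Type} [Fintype ι] [DecidableEq ι] [Fintype κ]
    (Φ : Matrix ι ι ℂ → Matrix κ κ ℂ) : Prop :=
  IsLinearMap ℂ Φ ∧ (∀ X, (Φ X).trace = X.trace) ∧ (choi Φ).PosSemidef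

/-- Completely positive (not necessarily trace-preserving) map. -/
def IsCP {ι κ : Type} [Fintype ι] [DecidableEq ι] [Fintype κ]
    (Φ : Matrix ι ι ℂ → Matrix κ κ ℂ) : Prop :=
  IsLinearMap ℂ Φ ∧ (choi Φ).PosSemidef

/-- Partial trace over the first tensor factor. -/
def ptraceA {α β : Type} [Fintype α] (M : Matrix (α × β) (α × β) ℂ) :
    Matrix β β ℂ := fun j j' => ∑ i, M (i, j) (i, j')

/-- Partial trace over the second tensor factor. -/
def ptraceB {α β : Type} [Fintype β] (M : Matrix (α × β) (α × β) ℂ) :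
    Matrix α α ℂ := fun i i' => ∑ j, M (i, j) (i', j)

/-- The map `Φ ⊗ id` acting on the first tensor factor. -/
def lTensorId {α α' β : Type} (Φ : Matrix α α ℂ → Matrix α' α' ℂ)
    (X : Matrix (α × β) (α × β) ℂ) : Matrix (α' × β) (α' × β) ℂ :=
  fun p q => Φ (fun k k' => X (k, p.2) (k', q.2)) p.1 q.1

/-- The map `id ⊗ Φ` acting on the second tensor factor. -/
def rTensorId {α β β' : Type} (Φ : Matrix β β ℂ → Matrix β' β' ℂ)
    (X : Matrix (α × β) (α × β) ℂ) : Matrix (α × β') (α × β') ℂ :=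
  fun p q => Φ (fun k k' => X (p.1, k) (q.1, k')) p.2 q.2

/-- `A ↛ B'` semi-causality of a bipartite channel. -/
def SemiCausal {a b b' : ℕ} (N : BMat a b → BMat a b') : Prop :=
  ∀ M : Mat a → Mat a, IsCPTP M →
    ∀ X : BMat a b, ptraceA (N (lTensorId M X)) = ptraceA (N X)

/-- Conditional unitality of a bipartite channel. -/
def CondUnital {a b b' : ℕ} (N : BMat a b → BMat a b') : Prop :=
  ∀ ρ : Mat b, IsDensity ρ →
    ∃ σ : Mat b', IsDensity σ ∧ N (uMat a ⊗ₖ ρ) = uMat a ⊗ₖ σ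

/-- Conditionally unital semi-causal channels. -/
def CUSC {a b b' : ℕ} (N : BMat a b → BMat a b') : Prop :=
  IsCPTP N ∧ CondUnital N ∧ SemiCausal N

/-- The channel `X ↦ V X V†` associated with a matrix `V`. -/
def isomChannel {a a' : ℕ} (V : Matrix (Fin a') (Fin a) ℂ) (X : Mat a) : Mat a' :=
  V * X * Vᴴ

/-- Conditional majorization `σ ≾_A ρ`. -/
def CondMajor {a' b' a b : ℕ} (σ : BMat a' b') (ρ : BMat a b) : Prop :=
  (a ≤ a' ∧ ∃ V : Matrix (Fin a') (Fin a) ℂ, Vᴴ * V = 1 ∧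
      ∃ N : BMat a b → BMat a b', CUSC N ∧ σ = lTensorId (isomChannel V) (N ρ)) ∨
  (a' ≤ a ∧ ∃ U : Matrix (Fin a) (Fin a') ℂ, Uᴴ * U = 1 ∧
      ∃ N : BMat a b → BMat a b', CUSC N ∧ lTensorId (isomChannel U) σ = N ρ)

/-- The tensor product `ρ_{AB} ⊗ τ_{A'B'}` regrouped as a state on `(AA')(BB')`. -/
def prodState {a b a' b' : ℕ} (ρ : BMat a b) (τ : BMat a' b') :
    BMat (a * a') (b * b') := fun p q =>
  ρ ((finProdFinEquiv.symm p.1).1, (finProdFinEquiv.symm p.2).1)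
    ((finProdFinEquiv.symm q.1).1, (finProdFinEquiv.symm q.2).1) *
  τ ((finProdFinEquiv.symm p.1).2, (finProdFinEquiv.symm p.2).2)
    ((finProdFinEquiv.symm q.1).2, (finProdFinEquiv.symm q.2).2)

/-- A conditional entropy: a real function on bipartite density matrices of all
finite dimensions, monotone under conditional majorization, additive under tensor
products, and normalized to `1` on the one-qubit maximally mixed state. -/
structure CondEntropy where
  H : ∀ {a b : ℕ}, BMat a b → ℝ
  mono : ∀ {a b a' b' : ℕ} (ρ : BMat a b) (σ : BMat a' b'),
    IsDensity ρ → IsDensity σ → CondMajor σ ρ → H ρ ≤ H σ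
  additive : ∀ {a b a' b' : ℕ} (ρ : BMat a b) (τ : BMat a' b'),
    IsDensity ρ → IsDensity τ → H (prodState ρ τ) = H ρ + H τ
  normalized : H (uMat 2 ⊗ₖ (1 : Mat 1)) = 1

/-- Maximally entangled state `φ⁺` on `ℂ^d ⊗ ℂ^d`. -/
def maxEnt (d : ℕ) : BMat d d :=
  fun p q => if p.1 = p.2 ∧ q.1 = q.2 then (d : ℂ)⁻¹ else 0

/-- The sum of the `k` largest values of `f`. -/
def sumTopK {ι : Type} [Fintype ι] [DecidableEq ι] (k : ℕ) (f : ι → ℝ) : ℝ :=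
  (Finset.univ.powerset.filter fun s : Finset ι => s.card ≤ k).sup'
    ⟨∅, Finset.mem_filter.mpr ⟨Finset.mem_powerset.mpr (Finset.empty_subset _), by simp⟩⟩
    fun s => ∑ i ∈ s, f i

/-- Ky Fan `k`-norm (sum of the `k` largest eigenvalues) of a hermitian matrix. -/
def kyFan {ι : Type} [Fintype ι] [DecidableEq ι] (k : ℕ) (X : Matrix ι ι ℂ) : ℝ :=
  if h : X.IsHermitian then sumTopK k h.eigenvalues else 0

/-- The rank-one projector `|v⟩⟨v|`. -/
def projv {n : ℕ} (v : Fin n → ℂ) : Mat n := fun i j => v i * star (v j)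

/-- A rank-one projective measurement, given by an orthonormal family of vectors. -/
def IsRankOneMeas {n : ℕ} (u : Fin n → Fin n → ℂ) : Prop :=
  ∀ z z', (∑ i, star (u z i) * u z' i) = if z = z' then 1 else 0

/-- A column-stochastic matrix. -/
def ColStochastic {a c : ℕ} (T : Matrix (Fin a) (Fin c) ℝ) : Prop :=
  (∀ w z, 0 ≤ T w z) ∧ ∀ z, ∑ w, T w z = 1

/-- Reward of the bipartite gambling game `(T, 0)` (no adversary). -/
def R0 {a b c : ℕ} (T : Matrix (Fin a) (Fin c) ℝ) (ρ : BMat a b) : ℝ :=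
  ⨆ u : {u : Fin b → Fin b → ℂ // IsRankOneMeas u}, ⨆ f : Fin b → Fin c,
    ∑ z, ∑ w, T w (f z) *
      kyFan (w.1 + 1)
        (ptraceB (((1 : Mat a) ⊗ₖ projv (u.1 z)) * ρ * ((1 : Mat a) ⊗ₖ projv (u.1 z))))

/-- Reward of the bipartite gambling game `(T, p)`. -/
def Rgame {a b c : ℕ} (T : Matrix (Fin a) (Fin c) ℝ) (p : ℝ) (ρ : BMat a b) : ℝ :=
  p * (⨅ v : {v : Fin a → Fin a → ℂ // IsRankOneMeas v},
        R0 T (∑ j, (projv (v.1 j) ⊗ₖ (1 : Mat b)) * ρ * (projv (v.1 j) ⊗ₖ (1 : Mat b)))) +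
  (1 - p) * R0 T ρ

/-- Reward of a quantum-channel gambling game `ρ_{ABX} = Σ_x p_x ρ^{(x)}_{AB} ⊗ |x⟩⟨x|`
for a channel `N` with output system `A`. -/
def Rch {n m dA b ℓ : ℕ} (N : Mat n → Mat m)
    (p : Fin ℓ → ℝ) (ρx : Fin ℓ → BMat dA b) : ℝ :=
  ⨆ E : {E : Mat dA → Mat n // IsCPTP E},
    ∑ x, p x * kyFan (x.1 + 1) (lTensorId (fun Y => N (E.1 Y)) (ρx x))

/-- The classical channel induced by a column-stochastic transition matrix. -/
def classicalChannel {x y : ℕ} (P : Matrix (Fin y) (Fin x) ℝ) : Mat x → Mat y :=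
  fun ρ => Matrix.of fun i j => if i = j then ∑ k, (P i k : ℂ) * ρ k k else 0

/-- Classical game reward `Prob_T` of a classical channel with transition matrix `P`. -/
def ProbT {yd xd wn zn : ℕ} (P : Matrix (Fin yd) (Fin xd) ℝ)
    (T : Matrix (Fin wn) (Fin zn) ℝ) : ℝ :=
  ∑ z, ⨆ x : Fin xd, ∑ w, T w z * sumTopK (w.1 + 1) (fun i => P i x)

/-- A joint probability matrix. -/
def JointProb {m n : ℕ} (P : Matrix (Fin m) (Fin n) ℝ) : Prop :=
  (∀ x y, 0 ≤ P x y) ∧ ∑ x, ∑ y, P x y = 1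

/-- A row-stochastic matrix. -/
def RowStochastic {n n' : ℕ} (t : Matrix (Fin n) (Fin n') ℝ) : Prop :=
  (∀ y w, 0 ≤ t y w) ∧ ∀ y, ∑ w, t y w = 1

/-- A doubly stochastic matrix. -/
def IsDoublyStochastic {m : ℕ} (d : Matrix (Fin m) (Fin m) ℝ) : Prop :=
  (∀ i j, 0 ≤ d i j) ∧ (∀ i, ∑ j, d i j = 1) ∧ (∀ j, ∑ i, d i j = 1)

/-- The quantum channel induced by a (doubly) stochastic matrix. -/
def dsChannel {m : ℕ} (d : Matrix (Fin m) (Fin m) ℝ) : Mat m → Mat m :=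
  fun ρ => Matrix.of fun x x' => if x = x' then ∑ y, (d x y : ℂ) * ρ y y else 0

/-- Diagonal bipartite state associated with a joint probability matrix. -/
def classicalState {m n : ℕ} (P : Matrix (Fin m) (Fin n) ℝ) : BMat m n :=
  Matrix.of fun p q => if p = q then (P p.1 p.2 : ℂ) else 0

/-- von Neumann entropy `S(ρ) = -Σ λ_i log₂ λ_i`. -/
def vnEntropy {ι : Type} [Fintype ι] [DecidableEq ι] (ρ : Matrix ι ι ℂ) : ℝ :=
  if h : ρ.IsHermitian then -∑ i, h.eigenvalues i * Real.logb 2 (h.eigenvalues i) else 0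

/-- von Neumann conditional entropy `H(A|B) = S(ρ_AB) - S(ρ_B)`. -/
def condVN {a b : ℕ} (ρ : BMat a b) : ℝ := vnEntropy ρ - vnEntropy (ptraceA ρ)

/-- Classical game reward for a classical bipartite state with joint distribution `q`
(`y` on `A`, `z` on `B`). -/
def ProbTstate {a b c : ℕ} (T : Matrix (Fin a) (Fin c) ℝ)
    (q : Matrix (Fin a) (Fin b) ℝ) : ℝ :=
  ∑ z, ⨆ z' : Fin c, ∑ w, T w z' * sumTopK (w.1 + 1) (fun y => q y z)


section SumTopK

variable {ι : Type} [Fintype ι] [DecidableEq ι]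

lemma le_sumTopK {k : ℕ} (f : ι → ℝ) {s : Finset ι} (hs : s.card ≤ k) :
    ∑ i ∈ s, f i ≤ sumTopK k f :=
  Finset.le_sup' (fun s => ∑ i ∈ s, f i) (by simpa using hs)

lemma sumTopK_le {k : ℕ} {f : ι → ℝ} {b : ℝ}
    (h : ∀ s : Finset ι, s.card ≤ k → ∑ i ∈ s, f i ≤ b) : sumTopK k f ≤ b :=
  Finset.sup'_le _ _ fun s hs => h s (Finset.mem_filter.mp hs).2

lemma sumTopK_zero (f : ι → ℝ) : sumTopK 0 f = 0 :=
  le_antisymm (sumTopK_le fun s hs => by simp [Finset.card_eq_zero.mp (Nat.le_zero.mp hs)])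
    (by simpa using le_sumTopK f (s := ∅) le_rfl)

lemma sumTopK_of_card_le {k : ℕ} (f : ι → ℝ) (hk : Fintype.card ι ≤ k) :
    sumTopK k f = sumTopK (Fintype.card ι) f :=
  le_antisymm (sumTopK_le fun s _ => le_sumTopK f s.card_le_univ)
    (sumTopK_le fun _ hs => le_sumTopK f (hs.trans hk))

lemma sumTopK_const_le (k : ℕ) {a : ℝ} (ha : 0 ≤ a) : sumTopK k (fun _ : ι => a) ≤ k * a :=
  sumTopK_le fun s hs => by
    rw [Finset.sum_const, nsmul_eq_mul]
    exact mul_le_mul_of_nonneg_right (by exact_mod_cast hs) ha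

/-- A `k`-subset maximizing the sum dominates every element outside it (else swap), so its
average is at least the average of its complement, hence at least the overall average. -/
lemma exists_card_eq_mul_sum_le (f : ι → ℝ) {k : ℕ} (hk : k ≤ Fintype.card ι) :
    ∃ s : Finset ι, s.card = k ∧ k * ∑ i, f i ≤ Fintype.card ι * ∑ i ∈ s, f i := by
  obtain ⟨s, hs, hmax⟩ := (Finset.univ.powersetCard k).exists_max_image (fun s => ∑ i ∈ s, f i)
    (Finset.powersetCard_nonempty.mpr (by simpa using hk))
  rw [Finset.mem_powersetCard] at hs
  have hdom : ∀ i ∈ sᶜ, ∀ j ∈ s, f i ≤ f j := by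
    intro i hi j hj
    have hs_pos := Finset.card_pos.mpr ⟨j, hj⟩
    have hi' : i ∉ s.erase j := fun h => Finset.mem_compl.mp hi (Finset.mem_of_mem_erase h)
    have := hmax (insert i (s.erase j)) (Finset.mem_powersetCard.mpr ⟨Finset.subset_univ _,
      by rw [Finset.card_insert_of_notMem hi', Finset.card_erase_of_mem hj]; omega⟩)
    rw [Finset.sum_insert hi', ← Finset.add_sum_erase s f hj] at this
    linarith
  have hcross : (k : ℝ) * ∑ i ∈ sᶜ, f i ≤ (Fintype.card ι - k : ℕ) * ∑ j ∈ s, f j := by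
    calc (k : ℝ) * ∑ i ∈ sᶜ, f i = ∑ j ∈ s, ∑ i ∈ sᶜ, f i := by simp [hs.2]
      _ ≤ ∑ j ∈ s, ∑ i ∈ sᶜ, f j :=
        Finset.sum_le_sum fun j hj => Finset.sum_le_sum fun i hi => hdom i hi j hj
      _ = (Fintype.card ι - k : ℕ) * ∑ j ∈ s, f j := by
        rw [Finset.sum_comm, Finset.sum_const, Finset.card_compl, hs.2, nsmul_eq_mul]
  refine ⟨s, hs.2, ?_⟩
  rw [← Finset.sum_add_sum_compl s f]
  rw [Nat.cast_sub hk] at hcross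
  linarith

lemma mul_sum_le_card_mul_sumTopK (f : ι → ℝ) {k : ℕ} (hk : k ≤ Fintype.card ι) :
    k * ∑ i, f i ≤ Fintype.card ι * sumTopK k f := by
  obtain ⟨s, hs, hsum⟩ := exists_card_eq_mul_sum_le f hk
  exact hsum.trans (mul_le_mul_of_nonneg_left (le_sumTopK f hs.le) (Nat.cast_nonneg _))

lemma forall_sumTopK_le_iff {f g : ι → ℝ} :
    (∀ k, sumTopK k f ≤ sumTopK k g) ↔
      ∀ k, 0 < k → k ≤ Fintype.card ι → sumTopK k f ≤ sumTopK k g := by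
  refine ⟨fun h k _ _ => h k, fun h k => ?_⟩
  rcases Nat.eq_zero_or_pos k with rfl | hk0
  · rw [sumTopK_zero, sumTopK_zero]
  rcases le_total k (Fintype.card ι) with hk | hk
  · exact h k hk0 hk
  rw [sumTopK_of_card_le f hk, sumTopK_of_card_le g hk]
  rcases Nat.eq_zero_or_pos (Fintype.card ι) with h0 | hpos
  · rw [h0, sumTopK_zero, sumTopK_zero]
  · exact h _ hpos le_rfl

end SumTopK

lemma kyFan_eq_sumTopK {ι : Type} [Fintype ι] [DecidableEq ι] {k : ℕ} {A : Matrix ι ι ℂ}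
    (hA : A.IsHermitian) : kyFan k A = sumTopK k hA.eigenvalues :=
  dif_pos hA

lemma Matrix.IsHermitian.sum_eigenvalues_eq_one {ι : Type} [Fintype ι] [DecidableEq ι]
    {A : Matrix ι ι ℂ} (hA : A.IsHermitian) (htr : A.trace = 1) : ∑ i, hA.eigenvalues i = 1 := by
  simpa [htr] using (congrArg Complex.re hA.trace_eq_sum_eigenvalues).symm

lemma Matrix.IsHermitian.eigenvalues_eq_of_eq_algebraMap {ι : Type} [Fintype ι] [DecidableEq ι]
    [Nonempty ι] {A : Matrix ι ι ℂ} (hA : A.IsHermitian) {r : ℝ} (h : A = algebraMap ℝ _ r)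
    (i : ι) : hA.eigenvalues i = r := by
  subst h
  simpa [spectrum.scalar_eq] using hA.eigenvalues_mem_spectrum_real i

lemma uMat_eq_algebraMap (d : ℕ) : uMat d = algebraMap ℝ (Mat d) (d : ℝ)⁻¹ := by
  ext i j
  simp [uMat, Algebra.algebraMap_eq_smul_one, Matrix.one_apply]

lemma uMat_isHermitian (d : ℕ) : (uMat d).IsHermitian :=
  isHermitian_one.smul (by simp [IsSelfAdjoint])

lemma kyFan_uMat_le {d k : ℕ} (hd : 0 < d) (hk : k ≤ d) {X : Mat d} (hX : X.IsHermitian)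
    (htr : X.trace = 1) : kyFan k (uMat d) ≤ kyFan k X := by
  have : Nonempty (Fin d) := ⟨⟨0, hd⟩⟩
  have hbound := mul_sum_le_card_mul_sumTopK hX.eigenvalues (by simpa using hk)
  rw [hX.sum_eigenvalues_eq_one htr, Fintype.card_fin, mul_one] at hbound
  rw [kyFan_eq_sumTopK (uMat_isHermitian d), kyFan_eq_sumTopK hX,
    funext ((uMat_isHermitian d).eigenvalues_eq_of_eq_algebraMap (uMat_eq_algebraMap d))]
  calc sumTopK k (fun _ : Fin d => (d : ℝ)⁻¹) ≤ k * (d : ℝ)⁻¹ :=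
        sumTopK_const_le k (by positivity)
    _ ≤ sumTopK k hX.eigenvalues := by
        rw [← div_eq_mul_inv, div_le_iff₀ (by exact_mod_cast hd)]
        linarith

def pinch {d : ℕ} (v : Fin d → Fin d → ℂ) (X : Mat d) : Mat d :=
  ∑ j, projv (v j) * X * projv (v j)

section Pinch

variable {d : ℕ}

lemma isRankOneMeas_transpose_iff {W : Mat d} : IsRankOneMeas Wᵀ ↔ Wᴴ * W = 1 := by
  simp [IsRankOneMeas, ← Matrix.ext_iff, Matrix.mul_apply, Matrix.one_apply]

lemma projv_conjTranspose (u : Fin d → ℂ) : (projv u)ᴴ = projv u := by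
  ext i j
  simp [projv, mul_comm]

lemma projv_mul_mul_projv (u : Fin d → ℂ) (X : Mat d) :
    projv u * X * projv u = (star u ⬝ᵥ X *ᵥ u) • projv u := by
  ext i j
  simp only [projv, Matrix.mul_apply, Matrix.smul_apply, dotProduct, Matrix.mulVec, smul_eq_mul,
    Finset.sum_mul, Finset.mul_sum, Pi.star_apply]
  rw [Finset.sum_comm]
  exact Finset.sum_congr rfl fun _ _ => Finset.sum_congr rfl fun _ _ => by ring

lemma IsRankOneMeas.sum_projv {v : Fin d → Fin d → ℂ} (hv : IsRankOneMeas v) :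
    ∑ j, projv (v j) = 1 := by
  have h := mul_eq_one_comm.mp (isRankOneMeas_transpose_iff (W := (Matrix.of v)ᵀ) |>.mp hv)
  ext i i'
  simpa [projv, Matrix.mul_apply, Matrix.sum_apply] using congrFun (congrFun h i) i'

lemma IsRankOneMeas.trace_pinch {v : Fin d → Fin d → ℂ} (hv : IsRankOneMeas v) (X : Mat d) :
    (pinch v X).trace = X.trace := by
  have hsq : ∀ j, projv (v j) * projv (v j) = projv (v j) := fun j => by
    have hnorm : star (v j) ⬝ᵥ v j = 1 := by simpa [dotProduct] using hv j j
    simpa [hnorm] using projv_mul_mul_projv (v j) 1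
  simp only [pinch, Matrix.trace_sum]
  calc ∑ j, (projv (v j) * X * projv (v j)).trace = ∑ j, (projv (v j) * X).trace := by
        refine Finset.sum_congr rfl fun j _ => ?_
        rw [Matrix.trace_mul_comm, ← Matrix.mul_assoc, hsq]
    _ = X.trace := by rw [← Matrix.trace_sum, ← Finset.sum_mul, hv.sum_projv, Matrix.one_mul]

lemma pinch_isHermitian (v : Fin d → Fin d → ℂ) {X : Mat d} (hX : X.IsHermitian) :
    (pinch v X).IsHermitian :=
  isSelfAdjoint_sum _ fun j _ => by
    have := isHermitian_mul_mul_conjTranspose (projv (v j)) hX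
    rwa [projv_conjTranspose] at this

lemma IsRankOneMeas.pinch_eq_smul_one {v : Fin d → Fin d → ℂ} (hv : IsRankOneMeas v) {X : Mat d}
    {c : ℂ} (hc : ∀ j, star (v j) ⬝ᵥ X *ᵥ v j = c) : pinch v X = c • 1 := by
  simp only [pinch, projv_mul_mul_projv, hc, ← Finset.smul_sum, hv.sum_projv]

end Pinch

def fourierMatrix (d : ℕ) : Mat d :=
  Matrix.of fun k j => ((√d : ℝ) : ℂ)⁻¹ * Complex.exp (2 * Real.pi * Complex.I / d) ^ (k.1 * j.1)

section Fourier

open Complex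

variable {d : ℕ}

lemma norm_exp_two_pi_I_div (hd : 0 < d) : ‖exp (2 * Real.pi * I / d)‖ = 1 :=
  norm_eq_one_of_pow_eq_one (isPrimitiveRoot_exp d hd.ne').pow_eq_one hd.ne'

lemma star_sqrt_inv_mul_sqrt_inv (d : ℕ) :
    star ((√d : ℝ) : ℂ)⁻¹ * ((√d : ℝ) : ℂ)⁻¹ = (d : ℂ)⁻¹ := by
  rw [star_inv₀, Complex.star_def, conj_ofReal, ← mul_inv, ← ofReal_mul,
    Real.mul_self_sqrt (Nat.cast_nonneg _), ofReal_natCast]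

lemma star_fourierMatrix_mul_self (hd : 0 < d) (k j : Fin d) :
    star (fourierMatrix d k j) * fourierMatrix d k j = (d : ℂ)⁻¹ := by
  have hω : star (exp (2 * Real.pi * I / d)) * exp (2 * Real.pi * I / d) = 1 := by
    rw [Complex.star_def, conj_mul', norm_exp_two_pi_I_div hd]
    simp
  simp only [fourierMatrix, Matrix.of_apply, star_mul', star_pow]
  rw [mul_mul_mul_comm, star_sqrt_inv_mul_sqrt_inv, ← mul_pow, hω, one_pow, mul_one]

lemma fourierMatrix_conjTranspose_mul_self (hd : 0 < d) :
    (fourierMatrix d)ᴴ * fourierMatrix d = 1 := by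
  set ω := exp (2 * Real.pi * I / d) with hω_def
  have hω := isPrimitiveRoot_exp d hd.ne'
  have hω0 : ω ≠ 0 := hω.ne_zero hd.ne'
  have hstar : star ω = ω⁻¹ := (inv_eq_conj (norm_exp_two_pi_I_div hd)).symm
  ext z z'
  set ζ := ω⁻¹ ^ z.1 * ω ^ z'.1 with hζ
  have hentry : ∀ k : Fin d, star (fourierMatrix d k z) * fourierMatrix d k z' =
      (d : ℂ)⁻¹ * ζ ^ k.1 := fun k => by
    simp only [fourierMatrix, Matrix.of_apply, star_mul', star_pow]
    rw [← hω_def, hstar, mul_mul_mul_comm, star_sqrt_inv_mul_sqrt_inv]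
    ring
  simp only [Matrix.mul_apply, Matrix.conjTranspose_apply, hentry, ← Finset.mul_sum,
    Fin.sum_univ_eq_sum_range (fun k => ζ ^ k), Matrix.one_apply]
  split_ifs with hzz
  · have : ζ = 1 := by rw [hζ, hzz, inv_pow, inv_mul_cancel₀ (pow_ne_zero _ hω0)]
    simp [this, hd.ne']
  · have hζ1 : ζ ≠ 1 := fun h => hzz (Fin.ext (hω.pow_inj z.isLt z'.isLt
      ((inv_mul_eq_one₀ (pow_ne_zero _ hω0)).mp (by rwa [← inv_pow]))))
    have hζd : ζ ^ d = 1 := by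
      rw [hζ, mul_pow, ← pow_mul, ← pow_mul, mul_comm _ d, mul_comm _ d, pow_mul, pow_mul,
        inv_pow, hω.pow_eq_one]
      simp
    rw [geom_sum_eq hζ1, hζd, sub_self, zero_div, mul_zero]

end Fourier

/-- Measuring in the Fourier transform of an eigenbasis of `σ` gives every outcome the same
weight, so the pinched state is maximally mixed. -/
lemma exists_isRankOneMeas_pinch_eq {d : ℕ} (hd : 0 < d) {σ : Mat d} (hσ : σ.IsHermitian) :
    ∃ v, IsRankOneMeas v ∧ pinch v σ = ((d : ℂ)⁻¹ * σ.trace) • 1 := by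
  set U : Mat d := (hσ.eigenvectorUnitary : Mat d)
  set F := fourierMatrix d
  have hUU : Uᴴ * U = 1 := Unitary.coe_star_mul_self hσ.eigenvectorUnitary
  have hdiag : Uᴴ * σ * U = Matrix.diagonal (RCLike.ofReal ∘ hσ.eigenvalues) := by
    rw [← Matrix.star_eq_conjTranspose]
    simpa using hσ.conjStarAlgAut_star_eigenvectorUnitary
  have hv : IsRankOneMeas (U * F)ᵀ := isRankOneMeas_transpose_iff.mpr <| by
    rw [Matrix.conjTranspose_mul, Matrix.mul_assoc, ← Matrix.mul_assoc Uᴴ, hUU, Matrix.one_mul,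
      fourierMatrix_conjTranspose_mul_self hd]
  refine ⟨(U * F)ᵀ, hv, hv.pinch_eq_smul_one fun j => ?_⟩
  have hconj : (U * F)ᴴ * σ * (U * F) = Fᴴ * (Uᴴ * σ * U) * F := by
    simp only [Matrix.conjTranspose_mul, Matrix.mul_assoc]
  rw [show star ((U * F)ᵀ j) ⬝ᵥ σ *ᵥ (U * F)ᵀ j = ((U * F)ᴴ * σ * (U * F)) j j by
    rw [Matrix.mul_mul_apply]; rfl, hconj, hdiag, hσ.trace_eq_sum_eigenvalues, Finset.mul_sum]
  simp only [Matrix.mul_apply (M := _ * _), Matrix.mul_diagonal, Matrix.conjTranspose_apply]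
  refine Finset.sum_congr rfl fun k _ => ?_
  rw [mul_right_comm, star_fourierMatrix_mul_self hd]
  rfl

def R0A {d c : ℕ} (T : Matrix (Fin d) (Fin c) ℝ) (X : Mat d) : ℝ :=
  ⨆ z' : Fin c, ∑ w, T w z' * kyFan (w.1 + 1) X

section TrivialB

variable {d c : ℕ}

lemma IsRankOneMeas.projv_eq_one {u : Fin 1 → Fin 1 → ℂ} (hu : IsRankOneMeas u) (z : Fin 1) :
    projv (u z) = 1 := by
  have h : u z 0 * star (u z 0) = 1 := by simpa [mul_comm] using hu z z
  ext i j
  simpa [Fin.fin_one_eq_zero i, Fin.fin_one_eq_zero j, projv, Matrix.one_apply] using h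

lemma ptraceB_kron_one (X : Mat d) : ptraceB (X ⊗ₖ (1 : Mat 1)) = X := by
  ext i i'
  simp [ptraceB]

lemma R0_kron_one (T : Matrix (Fin d) (Fin c) ℝ) (X : Mat d) :
    R0 T (X ⊗ₖ (1 : Mat 1)) = R0A T X := by
  have : Nonempty {u : Fin 1 → Fin 1 → ℂ // IsRankOneMeas u} :=
    ⟨⟨fun _ _ => 1, fun z z' => by simp [Subsingleton.elim z z']⟩⟩
  have hinner : ∀ u : {u : Fin 1 → Fin 1 → ℂ // IsRankOneMeas u}, ∀ f : Fin 1 → Fin c,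
      ∑ z, ∑ w, T w (f z) * kyFan (w.1 + 1)
        (ptraceB (((1 : Mat d) ⊗ₖ projv (u.1 z)) * (X ⊗ₖ (1 : Mat 1)) *
          ((1 : Mat d) ⊗ₖ projv (u.1 z)))) = ∑ w, T w (f 0) * kyFan (w.1 + 1) X := fun u f => by
    simp [u.2.projv_eq_one, ptraceB_kron_one]
  simp only [R0, R0A, hinner]
  exact ciSup_const.trans
    (Function.Surjective.iSup_comp (f := fun f : Fin 1 → Fin c => f 0)
      (fun z' => ⟨fun _ => z', rfl⟩) fun z' => ∑ w, T w z' * kyFan (w.1 + 1) X)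

lemma pinch_kron_one (v : Fin d → Fin d → ℂ) (X : Mat d) :
    ∑ j, (projv (v j) ⊗ₖ (1 : Mat 1)) * (X ⊗ₖ (1 : Mat 1)) * (projv (v j) ⊗ₖ (1 : Mat 1)) =
      pinch v X ⊗ₖ (1 : Mat 1) := by
  simp only [← Matrix.mul_kronecker_mul, Matrix.one_mul, pinch]
  ext p q
  simp [Matrix.sum_apply, Finset.sum_mul]

lemma Rgame_kron_one (T : Matrix (Fin d) (Fin c) ℝ) (p : ℝ) (X : Mat d) :
    Rgame T p (X ⊗ₖ (1 : Mat 1)) =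
      p * (⨅ v : {v : Fin d → Fin d → ℂ // IsRankOneMeas v}, R0A T (pinch v.1 X)) +
        (1 - p) * R0A T X := by
  simp only [Rgame, pinch_kron_one, R0_kron_one]

lemma R0A_mono {T : Matrix (Fin d) (Fin c) ℝ} (hT : ∀ w z, 0 ≤ T w z) {X Y : Mat d}
    (h : ∀ w : Fin d, kyFan (w.1 + 1) X ≤ kyFan (w.1 + 1) Y) : R0A T X ≤ R0A T Y :=
  ciSup_mono (Set.finite_range _).bddAbove fun z' =>
    Finset.sum_le_sum fun w _ => mul_le_mul_of_nonneg_left (h w) (hT w z')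

lemma iInf_R0A_pinch (hd : 0 < d) {T : Matrix (Fin d) (Fin c) ℝ} (hT : ∀ w z, 0 ≤ T w z)
    {X : Mat d} (hX : IsDensity X) :
    ⨅ v : {v : Fin d → Fin d → ℂ // IsRankOneMeas v}, R0A T (pinch v.1 X) = R0A T (uMat d) := by
  have hle : ∀ v : {v : Fin d → Fin d → ℂ // IsRankOneMeas v},
      R0A T (uMat d) ≤ R0A T (pinch v.1 X) := fun v =>
    R0A_mono hT fun w => kyFan_uMat_le hd w.isLt (pinch_isHermitian v.1 hX.1.1)
      ((v.2.trace_pinch X).trans hX.2)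
  obtain ⟨v₀, hv₀, hpinch⟩ := exists_isRankOneMeas_pinch_eq hd hX.1.1
  have : Nonempty {v : Fin d → Fin d → ℂ // IsRankOneMeas v} := ⟨⟨v₀, hv₀⟩⟩
  refine le_antisymm ?_ (le_ciInf hle)
  refine (ciInf_le ⟨_, Set.forall_mem_range.mpr hle⟩ ⟨v₀, hv₀⟩).trans_eq ?_
  rw [hpinch, hX.2, mul_one, uMat]

def singleGuessGame (i : Fin d) : Matrix (Fin d) (Fin 1) ℝ :=
  Matrix.of fun w _ => if w = i then 1 else 0

lemma colStochastic_singleGuessGame (i : Fin d) : ColStochastic (singleGuessGame i) :=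
  ⟨fun _ _ => ite_nonneg zero_le_one le_rfl, fun _ => by simp [singleGuessGame]⟩

lemma R0A_singleGuessGame (i : Fin d) (X : Mat d) :
    R0A (singleGuessGame i) X = kyFan (i.1 + 1) X := by
  simp [R0A, singleGuessGame]

end TrivialB

/-- with trivial `B`, game-majorization reduces to eigenvalue majorization. -/
theorem trivialB_game_majorization_iff {d : ℕ} (hd : 0 < d)
    (ρ σ : Mat d) (hρ : IsDensity ρ) (hσ : IsDensity σ) :
    (∀ (c : ℕ), 0 < c → ∀ T : Matrix (Fin d) (Fin c) ℝ, ColStochastic T →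
        ∀ p : ℝ, 0 ≤ p → p ≤ 1 →
          Rgame T p (σ ⊗ₖ (1 : Mat 1)) ≤ Rgame T p (ρ ⊗ₖ (1 : Mat 1))) ↔
      ∀ k : ℕ, sumTopK k hσ.1.1.eigenvalues ≤ sumTopK k hρ.1.1.eigenvalues := by
  have hgame : ∀ {c} {T : Matrix (Fin d) (Fin c) ℝ}, ColStochastic T → ∀ p {X : Mat d},
      IsDensity X → Rgame T p (X ⊗ₖ (1 : Mat 1)) = p * R0A T (uMat d) + (1 - p) * R0A T X :=
    fun hT p _ hX => by rw [Rgame_kron_one, iInf_R0A_pinch hd hT.1 hX]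
  rw [forall_sumTopK_le_iff]
  simp only [Fintype.card_fin, ← kyFan_eq_sumTopK]
  constructor
  · intro h k hk0 hkd
    obtain ⟨i, rfl⟩ : ∃ i : Fin d, i.1 + 1 = k := ⟨⟨k - 1, by omega⟩, by simp; omega⟩
    have hT := colStochastic_singleGuessGame i
    simpa [hgame hT 0 hσ, hgame hT 0 hρ, R0A_singleGuessGame] using
      h 1 one_pos _ hT 0 le_rfl zero_le_one
  · intro h c _ T hT p _ hp1
    rw [hgame hT p hσ, hgame hT p hρ]
    have hR0A : R0A T σ ≤ R0A T ρ := R0A_mono hT.1 fun w => h _ w.1.succ_pos w.isLt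
    nlinarith
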